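/- arXiv:2308.00913 — 2 statements merged into one kernel-verified Lean document; each statement's English description precedes it below -/
import Mathlib

section
/- The prior π_D(T) = α^{|T|-1} β^{|T|-L_D(T)} with α = (1-β)^{1/(m-1)}, β ∈ (0,1), is a probability distribution on 𝒯(D): ∑_{T ∈ 𝒯(D)} π_D(T) = 1 for every D ≥ 0. -/
inductive PTree (m : ℕ) : Type
  | leaf : PTree m
  | node (c : Fin m → PTree m) : PTree m

namespace PTree

def depth {m : ℕ} : PTree m → ℕ
  | leaf => 0
  | node c => (Finset.univ.sup fun j => depth (c j)) + 1

def numLeaves {m : ℕ} : PTree m → ℕ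
  | leaf => 1
  | node c => ∑ j, numLeaves (c j)

def leavesAt {m : ℕ} : ℕ → PTree m → ℕ
  | 0, leaf => 1
  | 0, node _ => 0
  | _ + 1, leaf => 0
  | d + 1, node c => ∑ j, leavesAt d (c j)

noncomputable def prior {m : ℕ} (α β : ℝ) (D : ℕ) (T : PTree m) : ℝ :=
  α ^ (numLeaves T - 1) * β ^ (numLeaves T - leavesAt D T)

def leafList {m : ℕ} : PTree m → List (List (Fin m))
  | leaf => [[]]
  | node c => (List.finRange m).flatMap fun j => (leafList (c j)).map fun u => j :: u

end PTree

namespace PTree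

noncomputable instance {m : ℕ} : DecidableEq (PTree m) := Classical.decEq _

/-- The finset of trees of depth at most `D`. -/
noncomputable def treesLe (m : ℕ) : ℕ → Finset (PTree m)
  | 0 => {leaf}
  | D + 1 =>
      insert leaf ((Fintype.piFinset fun _ : Fin m => treesLe m D).image node)

lemma node_ne_leaf {m : ℕ} (c : Fin m → PTree m) : node c ≠ leaf := by
  intro h; cases h

lemma mem_treesLe {m : ℕ} (D : ℕ) (T : PTree m) :
    T ∈ treesLe m D ↔ T.depth ≤ D := by
  induction D generalizing T with
  | zero =>
      cases T with
      | leaf => simp [treesLe, depth]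
      | node c => simp [treesLe, depth, node_ne_leaf]
  | succ D ih =>
      cases T with
      | leaf => simp [treesLe, depth]
      | node c =>
          simp only [treesLe, Finset.mem_insert, node_ne_leaf, false_or,
            Finset.mem_image, depth, add_le_add_iff_right, Finset.sup_le_iff,
            Finset.mem_univ, true_implies]
          constructor
          · rintro ⟨c', hc', h⟩ j
            cases h
            rw [← ih]
            exact (Fintype.mem_piFinset.mp hc') j
          · intro h
            exact ⟨c, Fintype.mem_piFinset.mpr fun j => (ih _).mpr (h j), rfl⟩

lemma one_le_numLeaves {m : ℕ} (hm : 1 ≤ m) (T : PTree m) : 1 ≤ T.numLeaves := by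
  induction T with
  | leaf => simp [numLeaves]
  | node c ih =>
      calc 1 ≤ (c ⟨0, hm⟩).numLeaves := ih _
        _ ≤ ∑ j, (c j).numLeaves :=
            Finset.single_le_sum (f := fun j => (c j).numLeaves)
              (fun j _ => Nat.zero_le _) (Finset.mem_univ _)

lemma leavesAt_le_numLeaves {m : ℕ} (d : ℕ) (T : PTree m) :
    T.leavesAt d ≤ T.numLeaves := by
  induction T generalizing d with
  | leaf => cases d <;> simp [leavesAt, numLeaves]
  | node c ih =>
      cases d with
      | zero => simp [leavesAt]
      | succ d => exact Finset.sum_le_sum fun j _ => ih j d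

lemma prior_node {m : ℕ} (hm : 1 ≤ m) (α β : ℝ) (D : ℕ) (c : Fin m → PTree m) :
    prior α β (D + 1) (node c) = α ^ (m - 1) * ∏ j, prior α β D (c j) := by
  have hnum : (node c).numLeaves = ∑ j, (c j).numLeaves := rfl
  have hlv : (node c).leavesAt (D + 1) = ∑ j, (c j).leavesAt D := rfl
  have h1 : (node c).numLeaves - 1 = (m - 1) + ∑ j, ((c j).numLeaves - 1) := by
    rw [hnum]
    have : (∑ j, ((c j).numLeaves - 1)) + m = ∑ j, (c j).numLeaves := by
      calc (∑ j, ((c j).numLeaves - 1)) + m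
          = (∑ j, ((c j).numLeaves - 1)) + ∑ _j : Fin m, 1 := by simp
        _ = ∑ j, ((c j).numLeaves - 1 + 1) := Finset.sum_add_distrib.symm
        _ = ∑ j, (c j).numLeaves :=
            Finset.sum_congr rfl fun j _ => Nat.sub_add_cancel (one_le_numLeaves hm (c j))
    omega
  have h2 : (node c).numLeaves - (node c).leavesAt (D + 1)
      = ∑ j, ((c j).numLeaves - (c j).leavesAt D) := by
    rw [hnum, hlv]
    have : ∑ j, ((c j).numLeaves - (c j).leavesAt D) + ∑ j, (c j).leavesAt D
        = ∑ j, (c j).numLeaves := by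
      rw [← Finset.sum_add_distrib]
      exact Finset.sum_congr rfl fun j _ =>
        Nat.sub_add_cancel (leavesAt_le_numLeaves D (c j))
    omega
  rw [prior, h1, h2, pow_add, ← Finset.prod_pow_eq_pow_sum,
    ← Finset.prod_pow_eq_pow_sum, mul_assoc, ← Finset.prod_mul_distrib]
  rfl

end PTree

/-- the BCT prior is a probability distribution on 𝒯(D). -/
theorem bct_prior_sums_to_one {m : ℕ} (hm : 2 ≤ m) {α β : ℝ}
    (hβ : β ∈ Set.Ioo (0 : ℝ) 1)
    (hα : α = (1 - β) ^ ((1 : ℝ) / ((m : ℝ) - 1)))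
    (D : ℕ) :
    ∑' T : {T : PTree m // T.depth ≤ D}, PTree.prior α β D T.1 = 1 := by
  have hm1 : 1 ≤ m := le_trans (by norm_num) hm
  have hβ0 : (0 : ℝ) < β := hβ.1
  have hβ1 : β < 1 := hβ.2
  have h1β : (0 : ℝ) < 1 - β := by linarith
  have hαpow : α ^ (m - 1) = 1 - β := by
    rw [hα, ← Real.rpow_natCast ((1 - β) ^ ((1 : ℝ) / ((m : ℝ) - 1))) (m - 1),
      ← Real.rpow_mul h1β.le]
    have hcast : ((m - 1 : ℕ) : ℝ) = (m : ℝ) - 1 := by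
      have : (1 : ℕ) ≤ m := hm1
      push_cast [this]; ring
    have hne : (m : ℝ) - 1 ≠ 0 := by
      have : (2 : ℝ) ≤ (m : ℝ) := by exact_mod_cast hm
      linarith
    rw [hcast, one_div, inv_mul_cancel₀ hne, Real.rpow_one]
  -- reduce to a finite sum
  have key : ∀ D : ℕ, ∑ T ∈ PTree.treesLe m D, PTree.prior α β D T = 1 := by
    intro D
    induction D with
    | zero =>
        simp [PTree.treesLe, PTree.prior, PTree.numLeaves, PTree.leavesAt]
    | succ D ih =>
        have hleaf : PTree.prior α β (D + 1) (PTree.leaf : PTree m) = β := by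
          simp [PTree.prior, PTree.numLeaves, PTree.leavesAt]
        have hinj : Function.Injective (PTree.node : (Fin m → PTree m) → PTree m) := by
          intro a b h; cases h; rfl
        have hnotmem : (PTree.leaf : PTree m) ∉
            (Fintype.piFinset fun _ : Fin m => PTree.treesLe m D).image PTree.node := by
          simp only [Finset.mem_image, not_exists]
          rintro c ⟨-, h⟩
          exact PTree.node_ne_leaf c h
        rw [PTree.treesLe, Finset.sum_insert hnotmem,
          Finset.sum_image fun a _ b _ h => hinj h, hleaf]
        have : ∑ c ∈ Fintype.piFinset (fun _ : Fin m => PTree.treesLe m D),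
            PTree.prior α β (D + 1) (PTree.node c)
            = α ^ (m - 1) * ∑ c ∈ Fintype.piFinset (fun _ : Fin m => PTree.treesLe m D),
                ∏ j, PTree.prior α β D (c j) := by
          rw [Finset.mul_sum]
          exact Finset.sum_congr rfl fun c _ => PTree.prior_node hm1 α β D c
        rw [this, ← Finset.prod_univ_sum]
        simp only [ih, Finset.prod_const_one, mul_one, hαpow]
        ring
  have hset : {T : PTree m | T.depth ≤ D} = ↑(PTree.treesLe m D) := by
    ext T; simp [PTree.mem_treesLe]
  calc ∑' T : {T : PTree m // T.depth ≤ D}, PTree.prior α β D T.1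
      = ∑' T : ↥{T : PTree m | T.depth ≤ D}, PTree.prior α β D T.1 := rfl
    _ = ∑' T : ↥(↑(PTree.treesLe m D) : Set (PTree m)), PTree.prior α β D T.1 := by
        rw [hset]
    _ = ∑ T ∈ PTree.treesLe m D, PTree.prior α β D T := by
        exact Finset.tsum_subtype _ _
    _ = 1 := key D
end

section
/- Let β ≥ 1/2 with β < 1, and assign a positive number P_e(s) > 0 to each node s of the complete m-ary tree of depth D. Define maximal probabilities recursively: P_m(s) = P_e(s) if s is at depth D, and P_m(s) = max{β P_e(s), (1-β) ∏_{j=0}^{m-1} P_m(sj)} otherwise. Then the value at the root satisfies P_m(root) = max_{T ∈ 𝒯(D)} π_D(T) ∏_{s ∈ leaves(T)} P_e(s), where π_D(T) = α^{|T|-1} β^{|T|-L_D(T)} and α = (1-β)^{1/(m-1)}. -/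
/-- Maximal probabilities of the CBCT recursion; first argument is the remaining depth. -/
noncomputable def Pm {m : ℕ} (β : ℝ) (Pe : List (Fin m) → ℝ) : ℕ → List (Fin m) → ℝ
  | 0, s => Pe s
  | d + 1, s => max (β * Pe s) ((1 - β) * ∏ j, Pm β Pe d (s ++ [j]))

namespace CBCTAux

open PTree

variable {m : ℕ}

lemma one_le_numLeaves (hm : 1 ≤ m) : ∀ T : PTree m, 1 ≤ numLeaves T
  | .leaf => le_refl _
  | .node c => by
    have : (1 : ℕ) ≤ numLeaves (c ⟨0, hm⟩) := one_le_numLeaves hm (c ⟨0, hm⟩)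
    calc (1:ℕ) ≤ numLeaves (c ⟨0, hm⟩) := this
      _ ≤ ∑ j, numLeaves (c j) :=
        Finset.single_le_sum (f := fun j => numLeaves (c j))
          (fun j _ => Nat.zero_le _) (Finset.mem_univ _)

lemma leavesAt_le_numLeaves : ∀ (d : ℕ) (T : PTree m), leavesAt d T ≤ numLeaves T
  | 0, .leaf => le_refl _
  | 0, .node _ => Nat.zero_le _
  | _ + 1, .leaf => Nat.zero_le _
  | d + 1, .node c => by
    simpa [leavesAt, numLeaves] using
      Finset.sum_le_sum fun j _ => leavesAt_le_numLeaves d (c j)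

lemma prod_leafList_node (c : Fin m → PTree m) (f : List (Fin m) → ℝ) :
    ((leafList (PTree.node c)).map f).prod
      = ∏ j, ((leafList (c j)).map fun u => f (j :: u)).prod := by
  rw [leafList, List.map_flatMap, List.flatMap, List.prod_flatten, List.map_map,
    ← List.ofFn_eq_map, List.prod_ofFn]
  simp [List.map_map, Function.comp_def]

lemma prior_node {α β : ℝ} (hm : 1 ≤ m) (hαm : α ^ (m - 1) = 1 - β)
    (D : ℕ) (c : Fin m → PTree m) :
    prior α β (D + 1) (PTree.node c) = (1 - β) * ∏ j, prior α β D (c j) := by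
  have h1 : ∀ j : Fin m, 1 ≤ numLeaves (c j) := fun j => one_le_numLeaves hm (c j)
  have h2 : ∀ j : Fin m, leavesAt D (c j) ≤ numLeaves (c j) :=
    fun j => leavesAt_le_numLeaves D (c j)
  have hs1 : ∑ j, (numLeaves (c j) - 1) = (∑ j, numLeaves (c j)) - m := by
    rw [Finset.sum_tsub_distrib _ (fun j _ => h1 j)]
    simp
  have hs2 : ∑ j, (numLeaves (c j) - leavesAt D (c j))
      = (∑ j, numLeaves (c j)) - ∑ j, leavesAt D (c j) :=
    Finset.sum_tsub_distrib _ (fun j _ => h2 j)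
  have hmsum : m ≤ ∑ j, numLeaves (c j) := by
    calc m = ∑ _j : Fin m, 1 := by simp
      _ ≤ ∑ j, numLeaves (c j) := Finset.sum_le_sum fun j _ => h1 j
  rw [prior]
  simp only [numLeaves, leavesAt]
  rw [← hαm]
  simp only [prior, Finset.prod_mul_distrib, Finset.prod_pow_eq_pow_sum, ← mul_assoc,
    ← pow_add, hs1, hs2]
  congr 2
  omega

variable {α β : ℝ} (hm : 2 ≤ m) (hβ2 : (1 : ℝ) / 2 ≤ β) (hβ1 : β < 1)
  (hαm : α ^ (m - 1) = 1 - β) (hα0 : 0 ≤ α)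
  (Pe : List (Fin m) → ℝ) (hPe : ∀ s, 0 < Pe s)

include hβ2 hβ1 hPe in
lemma Pm_pos : ∀ (D : ℕ) (s : List (Fin m)), 0 < Pm β Pe D s
  | 0, s => hPe s
  | d + 1, s => lt_max_of_lt_left (mul_pos (by linarith) (hPe s))

include hβ2 hβ1 hα0 in
lemma prior_nonneg (D : ℕ) (T : PTree m) : 0 ≤ prior α β D T := by
  have hβ0 : (0:ℝ) ≤ β := by linarith
  exact mul_nonneg (pow_nonneg hα0 _) (pow_nonneg hβ0 _)

omit hβ2 hβ1 in
lemma map_cons_prod (g : List (Fin m) → ℝ) (s : List (Fin m)) (j : Fin m) (T : PTree m) :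
    ((leafList T).map fun u => g (s ++ j :: u)).prod
      = ((leafList T).map fun u => g ((s ++ [j]) ++ u)).prod := by
  congr 1
  apply List.map_congr_left
  intro u _
  congr 1
  simp

include hPe in
lemma leafProd_pos (T : PTree m) (s : List (Fin m)) :
    0 < ((leafList T).map fun u => Pe (s ++ u)).prod := by
  apply List.prod_pos
  intro x hx
  simp only [List.mem_map] at hx
  obtain ⟨u, _, rfl⟩ := hx
  exact hPe _

include hm hβ2 hβ1 hαm hα0 hPe in
lemma value_le_Pm : ∀ (D : ℕ) (s : List (Fin m)) (T : PTree m), T.depth ≤ D →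
    prior α β D T * ((leafList T).map fun u => Pe (s ++ u)).prod ≤ Pm β Pe D s := by
  have hm1 : 1 ≤ m := le_trans (by norm_num) hm
  have hβ0 : (0:ℝ) ≤ β := by linarith
  intro D
  induction D with
  | zero =>
    intro s T hT
    cases T with
    | leaf => simp [prior, numLeaves, leavesAt, leafList, Pm]
    | node c => simp [depth] at hT
  | succ d ih =>
    intro s T hT
    cases T with
    | leaf =>
      have : prior α β (d + 1) (.leaf : PTree m) = β := by
        simp [prior, numLeaves, leavesAt]
      rw [this]
      simp only [leafList, List.map_cons, List.map_nil, List.prod_cons, List.prod_nil,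
        List.append_nil, mul_one]
      exact le_max_left _ _
    | node c =>
      have hsup : (Finset.univ.sup fun j => depth (c j)) ≤ d := by
        simpa only [depth, Nat.add_le_add_iff_right] using hT
      have hdep : ∀ j : Fin m, (c j).depth ≤ d := fun j =>
        (Finset.le_sup (f := fun j => depth (c j)) (Finset.mem_univ j)).trans hsup
      rw [prior_node hm1 hαm, prod_leafList_node]
      have hterm : ∀ j : Fin m,
          prior α β d (c j) * ((leafList (c j)).map fun u => Pe ((s ++ [j]) ++ u)).prod
            ≤ Pm β Pe d (s ++ [j]) := fun j => ih (s ++ [j]) (c j) (hdep j)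
      calc (1 - β) * (∏ j, prior α β d (c j)) * ∏ j, ((leafList (c j)).map
              fun u => Pe (s ++ j :: u)).prod
          = (1 - β) * ∏ j, (prior α β d (c j) *
              ((leafList (c j)).map fun u => Pe ((s ++ [j]) ++ u)).prod) := by
            rw [Finset.prod_mul_distrib, ← mul_assoc]
            congr 1
            exact Finset.prod_congr rfl fun j _ => map_cons_prod Pe s j (c j)
        _ ≤ (1 - β) * ∏ j, Pm β Pe d (s ++ [j]) := by
            apply mul_le_mul_of_nonneg_left _ (by linarith)
            apply Finset.prod_le_prod
            · intro j _
              exact mul_nonneg (prior_nonneg hβ2 hβ1 hα0 _ _)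
                (leafProd_pos Pe hPe _ _).le
            · exact fun j _ => hterm j
        _ ≤ Pm β Pe (d + 1) s := le_max_right _ _

include hm hβ2 hβ1 hαm hα0 hPe in
lemma exists_max_tree : ∀ (D : ℕ) (s : List (Fin m)), ∃ T : PTree m, T.depth ≤ D ∧
    prior α β D T * ((leafList T).map fun u => Pe (s ++ u)).prod = Pm β Pe D s := by
  have hm1 : 1 ≤ m := le_trans (by norm_num) hm
  intro D
  induction D with
  | zero =>
    intro s
    refine ⟨.leaf, le_refl _, ?_⟩
    simp [prior, numLeaves, leavesAt, leafList, Pm]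
  | succ d ih =>
    intro s
    by_cases hcase : (1 - β) * ∏ j, Pm β Pe d (s ++ [j]) ≤ β * Pe s
    · refine ⟨.leaf, by simp [depth], ?_⟩
      have : prior α β (d + 1) (.leaf : PTree m) = β := by
        simp [prior, numLeaves, leavesAt]
      rw [this]
      simp only [leafList, List.map_cons, List.map_nil, List.prod_cons, List.prod_nil,
        List.append_nil, mul_one, Pm]
      exact (max_eq_left hcase).symm
    · push_neg at hcase
      choose c hc hval using fun j : Fin m => ih (s ++ [j])
      refine ⟨.node c, ?_, ?_⟩
      · simp only [depth, Nat.add_le_add_iff_right]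
        exact Finset.sup_le fun j _ => hc j
      · rw [prior_node hm1 hαm, prod_leafList_node]
        have : (1 - β) * (∏ j, prior α β d (c j)) * ∏ j, ((leafList (c j)).map
              fun u => Pe (s ++ (j :: u))).prod
            = (1 - β) * ∏ j, Pm β Pe d (s ++ [j]) := by
          rw [mul_assoc, ← Finset.prod_mul_distrib]
          congr 1
          apply Finset.prod_congr rfl
          intro j _
          rw [map_cons_prod Pe s j (c j)]
          exact hval j
        rw [this, Pm]
        exact (max_eq_right hcase.le).symm

end CBCTAux

/-- the CBCT maximal probability at the root equals the maximum over all
trees in 𝒯(D) of the prior times the product of estimated probabilities at the leaves. -/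
theorem cbct_max_probability {m : ℕ} (hm : 2 ≤ m) {α β : ℝ}
    (hβ2 : (1 : ℝ) / 2 ≤ β) (hβ1 : β < 1)
    (hα : α = (1 - β) ^ ((1 : ℝ) / ((m : ℝ) - 1)))
    (D : ℕ) (Pe : List (Fin m) → ℝ) (hPe : ∀ s, 0 < Pe s) :
    Pm β Pe D []
      = ⨆ T : {T : PTree m // T.depth ≤ D},
          PTree.prior α β D T.1 * ((PTree.leafList T.1).map Pe).prod := by
  have hβ' : (0:ℝ) < 1 - β := by linarith
  have hα0 : 0 ≤ α := by rw [hα]; positivity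
  have hm1 : (1:ℝ) ≤ m := by exact_mod_cast le_trans (by norm_num) hm
  have hmne : (m:ℝ) - 1 ≠ 0 := by
    have : (2:ℝ) ≤ m := by exact_mod_cast hm
    linarith
  have hαm : α ^ (m - 1) = 1 - β := by
    rw [hα, ← Real.rpow_natCast _ (m - 1), ← Real.rpow_mul hβ'.le]
    have : ((m - 1 : ℕ) : ℝ) = (m : ℝ) - 1 := by
      have : 1 ≤ m := le_trans (by norm_num) hm
      push_cast [this]
      ring
    rw [this, one_div, inv_mul_cancel₀ hmne, Real.rpow_one]
  have hval : ∀ T : {T : PTree m // T.depth ≤ D},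
      PTree.prior α β D T.1 * ((PTree.leafList T.1).map Pe).prod ≤ Pm β Pe D [] := by
    intro T
    have := CBCTAux.value_le_Pm hm hβ2 hβ1 hαm hα0 Pe hPe D [] T.1 T.2
    simpa using this
  have hbdd : BddAbove (Set.range fun T : {T : PTree m // T.depth ≤ D} =>
      PTree.prior α β D T.1 * ((PTree.leafList T.1).map Pe).prod) := by
    refine ⟨Pm β Pe D [], ?_⟩
    rintro _ ⟨T, rfl⟩
    exact hval T
  haveI : Nonempty {T : PTree m // T.depth ≤ D} :=
    ⟨⟨.leaf, by simp [PTree.depth]⟩⟩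
  apply le_antisymm
  · obtain ⟨T, hT, hTval⟩ := CBCTAux.exists_max_tree hm hβ2 hβ1 hαm hα0 Pe hPe D []
    have : Pm β Pe D [] = PTree.prior α β D T * ((PTree.leafList T).map Pe).prod := by
      rw [← hTval]; simp
    rw [this]
    exact le_ciSup hbdd ⟨T, hT⟩
  · exact ciSup_le hval
end
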